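/- arXiv:2301.05134 — 6 statements merged into one kernel-verified Lean document; each statement's English description precedes it below -/
import Mathlib

section
/- For every integer α > 0, the star K_{1,n} with n = 3α + 3 leaves is not almost α-thin. -/
/-- A multigraph without loops: an edge type with an endpoints map into
unordered pairs of vertices, never diagonal. -/
structure Multigraph (V : Type u) where
  E : Type v
  ends : E → Sym2 V
  not_diag : ∀ e, ¬ (ends e).IsDiag

namespace Multigraph

variable {V : Type u} {W : Type w}

/-- Walks in a multigraph, recording the edges used. -/
inductive Walk (G : Multigraph.{u, v} V) : V → V → Type (max u v) where
  | nil (v : V) : Walk G v v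
  | cons {u v w : V} (e : G.E) (he : G.ends e = s(u, v)) (p : Walk G v w) : Walk G u w

variable {G : Multigraph V}

/-- The vertices visited by a walk, in order. -/
def Walk.support : ∀ {u v : V}, G.Walk u v → List V
  | u, _, .nil _ => [u]
  | u, _, .cons _ _ p => u :: p.support

/-- The edges used by a walk, in order. -/
def Walk.edgeList : ∀ {u v : V}, G.Walk u v → List G.E
  | _, _, .nil _ => []
  | _, _, .cons e _ p => e :: p.edgeList

/-- A walk is a path if it repeats no vertex. -/
def Walk.IsPath {u v : V} (p : G.Walk u v) : Prop := p.support.Nodup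

/-- The degree of a vertex: the number of edges incident with it
(there are no loops, so no edge is counted twice). -/
noncomputable def degree (G : Multigraph V) (v : V) : ℕ :=
  Nat.card {e : G.E // v ∈ G.ends e}

/-- An edge joins the sets `A` and `B` if one endpoint lies in `A` and the other in `B`. -/
def edgeBetween (G : Multigraph V) (e : G.E) (A B : Set V) : Prop :=
  ∃ a b, G.ends e = s(a, b) ∧ a ∈ A ∧ b ∈ B

/-- `G`, restricted to the vertex set `S`, is `α`-thin: there is an enumeration
`v_1, …, v_n` of `S` such that for each `i` at most `α` edges (with both ends in `S`)
join `{v_1, …, v_{i-1}}` to `{v_{i+1}, …, v_n}`. -/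
def IsThinOn (G : Multigraph V) (S : Set V) (α : ℕ) : Prop :=
  ∃ (n : ℕ) (en : Fin n ≃ S),
    ∀ i : Fin n,
      Nat.card {e : G.E // ∃ j k : Fin n, j < i ∧ i < k ∧
        G.ends e = s((en j : V), (en k : V))} ≤ α

/-- `G` is `α`-thin. -/
def IsThin (G : Multigraph V) (α : ℕ) : Prop := G.IsThinOn Set.univ α

/-- The neighbours of `x` within the vertex set `S` (via edges with both ends in `S`). -/
def nbrsIn (G : Multigraph V) (S : Set V) (x : V) : Set V :=
  {w | w ∈ S ∧ ∃ e : G.E, G.ends e = s(x, w)}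

/-- `G`, restricted to the vertex set `S`, is almost `α`-thin: it becomes `α`-thin after
removing at most `α` vertices, each having at most `α` neighbours. -/
def AlmostThinOn (G : Multigraph V) (S : Set V) (α : ℕ) : Prop :=
  ∃ X : Set V, X ⊆ S ∧ Nat.card X ≤ α ∧
    (∀ x ∈ X, Nat.card (G.nbrsIn S x) ≤ α) ∧ G.IsThinOn (S \ X) α

/-- `G` is almost `α`-thin. -/
def AlmostThin (G : Multigraph V) (α : ℕ) : Prop := G.AlmostThinOn Set.univ α

/-- A strong immersion of `H` in `G`: an injection of the vertices together with
pairwise edge-disjoint paths representing the edges, none of which passes through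
a branch vertex internally. -/
def StrongImmersion (H : Multigraph W) (G : Multigraph V) : Prop :=
  ∃ (f : W → V) (a b : H.E → V) (P : ∀ e : H.E, G.Walk (a e) (b e)),
    Function.Injective f ∧
    (∀ e, Sym2.map f (H.ends e) = s(a e, b e)) ∧
    (∀ e, (P e).IsPath) ∧
    (∀ e e', e ≠ e' → ∀ d, d ∈ (P e).edgeList → d ∉ (P e').edgeList) ∧
    (∀ e, ∀ x ∈ (P e).support, x ≠ a e → x ≠ b e → x ∉ Set.range f)

/-- A topological embedding of `H` in `G`: `G` contains a subdivision of `H` as a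
subgraph, given by an injection of the vertices and internally disjoint paths
representing the edges. -/
def TopEmbedding (H : Multigraph W) (G : Multigraph V) : Prop :=
  ∃ (f : W → V) (a b : H.E → V) (P : ∀ e : H.E, G.Walk (a e) (b e)),
    Function.Injective f ∧
    (∀ e, Sym2.map f (H.ends e) = s(a e, b e)) ∧
    (∀ e, (P e).IsPath) ∧
    (∀ e e', e ≠ e' → ∀ d, d ∈ (P e).edgeList → d ∉ (P e').edgeList) ∧
    (∀ e e', e ≠ e' → ∀ x, x ∈ (P e).support → x ∈ (P e').support →
      (x = a e ∨ x = b e) ∧ (x = a e' ∨ x = b e')) ∧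
    (∀ e, ∀ x ∈ (P e).support, x ≠ a e → x ≠ b e → x ∉ Set.range f)

/-- Contracting a graph along a map on vertices, keeping parallel edges and
omitting arising loops. -/
def contractMap (G : Multigraph V) (f : V → W) : Multigraph W where
  E := {e : G.E // ¬ (Sym2.map f (G.ends e)).IsDiag}
  ends e := Sym2.map f (G.ends e.1)
  not_diag e := e.2

end Multigraph

/-- The multigraph associated with a simple graph. -/
def SimpleGraph.toMultigraph {V : Type u} (G : SimpleGraph V) : Multigraph V where
  E := G.edgeSet
  ends := Subtype.val
  not_diag e := G.not_isDiag_of_mem_edgeSet e.2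

/-- The star `K_{1,n}` as a multigraph on `Fin (n+1)`, with centre `0`. -/
def StarMG (n : ℕ) : Multigraph (Fin (n + 1)) where
  E := Fin n
  ends i := s(0, i.succ)
  not_diag i := by simp [Sym2.mk_isDiag_iff, (Fin.succ_ne_zero i).symm]

/-- The multigraph `S_{k,n}` on `n+1` vertices `x = 0, v_1, …, v_n`, with `k`
parallel edges joining `x` and each `v_i`. -/
def Spider (k n : ℕ) : Multigraph (Fin (n + 1)) where
  E := Fin n × Fin k
  ends p := s(0, p.1.succ)
  not_diag p := by simp [Sym2.mk_isDiag_iff, (Fin.succ_ne_zero p.1).symm]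

/-- for every integer `α > 0`, the star `K_{1,n}` with `n = 3α + 3` leaves
is not almost `α`-thin. -/
theorem star_not_almostThin (α : ℕ) (hα : 0 < α) :
    ¬ (StarMG (3 * α + 3)).AlmostThin α := by
  rintro ⟨X, -, hXcard, hXdeg, n, en, hen⟩
  -- The centre `0` is not in `X`, since it has too many neighbours.
  have h0 : (0 : Fin (3 * α + 3 + 1)) ∉ X := by
    intro h0
    have hle := hXdeg 0 h0
    have hinj : Function.Injective
        (fun i : Fin (3 * α + 3) => (⟨i.succ, ⟨trivial, i, rfl⟩⟩ :
          (StarMG (3 * α + 3)).nbrsIn Set.univ 0)) := by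
      intro a b hab
      exact Fin.succ_injective _ (congrArg Subtype.val hab)
    have hcard := Nat.card_le_card_of_injective _ hinj
    simp only [Nat.card_eq_fintype_card, Fintype.card_fin] at hcard
    have := hcard.trans hle
    omega
  have h0mem : (0 : Fin (3 * α + 3 + 1)) ∈ Set.univ \ X := ⟨trivial, h0⟩
  set i₀ : Fin n := en.symm ⟨0, h0mem⟩ with hi₀
  have hi₀v : ((en i₀ : (Set.univ \ X : Set (Fin (3 * α + 3 + 1)))) : Fin (3 * α + 3 + 1)) = 0 := by
    simp [hi₀]
  -- `n` is large
  have hn1 : Nat.card ↥(Set.univ \ X) = n := by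
    simpa using Nat.card_congr en.symm
  have hn2 : (Set.univ \ X : Set (Fin (3 * α + 3 + 1))).ncard
      = (Set.univ : Set (Fin (3 * α + 3 + 1))).ncard - X.ncard :=
    Set.ncard_diff (Set.subset_univ X)
  have hn3 : (Set.univ : Set (Fin (3 * α + 3 + 1))).ncard = 3 * α + 4 := by
    simp [Set.ncard_univ]
  have hXc : X.ncard ≤ α := by
    simpa [Nat.card_coe_set_eq] using hXcard
  have hnge : 2 * α + 4 ≤ n := by
    rw [← hn1, Nat.card_coe_set_eq, hn2, hn3]
    omega
  -- a vertex other than the centre is a successor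
  have hsucc : ∀ j : Fin n, j ≠ i₀ →
      ∃ m : Fin (3 * α + 3), m.succ = ((en j : _) : Fin (3 * α + 3 + 1)) := by
    intro j hj
    have hne : ((en j : _) : Fin (3 * α + 3 + 1)) ≠ 0 := by
      intro h
      exact hj (en.injective (Subtype.ext (h.trans hi₀v.symm)))
    exact ⟨((en j : _) : Fin (3 * α + 3 + 1)).pred hne, Fin.succ_pred _ _⟩
  haveI : Finite ((StarMG (3 * α + 3)).E) := inferInstanceAs (Finite (Fin (3 * α + 3)))
  by_cases hcase : α + 2 ≤ (i₀ : ℕ)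
  · -- many leaves before the centre; the cut just before the centre is big
    have hi : (i₀ : ℕ) - 1 < n := lt_of_le_of_lt (Nat.sub_le _ _) i₀.isLt
    set i : Fin n := ⟨(i₀ : ℕ) - 1, hi⟩ with hidef
    have key := hen i
    have hjlt : ∀ t : Fin (α + 1), (t : ℕ) < n := fun t =>
      lt_of_lt_of_le (lt_of_lt_of_le t.isLt (by omega)) (le_of_lt i₀.isLt)
    have hjne : ∀ t : Fin (α + 1), (⟨(t : ℕ), hjlt t⟩ : Fin n) ≠ i₀ := by
      intro t h
      have := congrArg Fin.val h
      simp at this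
      omega
    choose m hm using fun t : Fin (α + 1) => hsucc ⟨(t : ℕ), hjlt t⟩ (hjne t)
    have hf : Function.Injective (fun t : Fin (α + 1) =>
        (⟨m t, ⟨(t : ℕ), hjlt t⟩, i₀,
          by have ht := t.isLt; simp only [hidef, Fin.lt_def]; omega,
          by simp only [hidef, Fin.lt_def]; omega, by
          show s(0, (m t).succ) = _
          rw [hm t, hi₀v, Sym2.eq_swap]⟩ :
          {e : (StarMG (3 * α + 3)).E // ∃ j k : Fin n, j < i ∧ i < k ∧
            (StarMG (3 * α + 3)).ends e = s(((en j : ↥(Set.univ \ X)) : Fin (3 * α + 3 + 1)), ((en k : ↥(Set.univ \ X)) : Fin (3 * α + 3 + 1)))})) := by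
      intro a b hab
      have h1 : m a = m b := congrArg Subtype.val hab
      have h2 : (m a).succ = (m b).succ := congrArg Fin.succ h1
      rw [hm a, hm b] at h2
      have h3 := en.injective (Subtype.ext h2)
      have := congrArg Fin.val h3
      exact Fin.ext (by simpa using this)
    have hcard := Nat.card_le_card_of_injective _ hf
    simp only [Nat.card_eq_fintype_card, Fintype.card_fin] at hcard
    have := hcard.trans key
    omega
  · -- many leaves after the centre; the cut just after the centre is big
    have hi : (i₀ : ℕ) + 1 < n := by omega
    set i : Fin n := ⟨(i₀ : ℕ) + 1, hi⟩ with hidef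
    have key := hen i
    have hklt : ∀ t : Fin (α + 1), (i₀ : ℕ) + 2 + (t : ℕ) < n := by
      intro t
      have := t.isLt
      omega
    have hkne : ∀ t : Fin (α + 1), (⟨(i₀ : ℕ) + 2 + (t : ℕ), hklt t⟩ : Fin n) ≠ i₀ := by
      intro t h
      have := congrArg Fin.val h
      simp at this
      omega
    choose m hm using fun t : Fin (α + 1) =>
      hsucc ⟨(i₀ : ℕ) + 2 + (t : ℕ), hklt t⟩ (hkne t)
    have hf : Function.Injective (fun t : Fin (α + 1) =>
        (⟨m t, i₀, ⟨(i₀ : ℕ) + 2 + (t : ℕ), hklt t⟩,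
          by simp only [hidef, Fin.lt_def]; omega,
          by simp only [hidef, Fin.lt_def]; omega, by
          show s(0, (m t).succ) = _
          rw [hm t, hi₀v]⟩ :
          {e : (StarMG (3 * α + 3)).E // ∃ j k : Fin n, j < i ∧ i < k ∧
            (StarMG (3 * α + 3)).ends e = s(((en j : ↥(Set.univ \ X)) : Fin (3 * α + 3 + 1)), ((en k : ↥(Set.univ \ X)) : Fin (3 * α + 3 + 1)))})) := by
      intro a b hab
      have h1 : m a = m b := congrArg Subtype.val hab
      have h2 : (m a).succ = (m b).succ := congrArg Fin.succ h1
      rw [hm a, hm b] at h2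
      have h3 := en.injective (Subtype.ext h2)
      have := congrArg Fin.val h3
      exact Fin.ext (by simpa using this)
    have hcard := Nat.card_le_card_of_injective _ hf
    simp only [Nat.card_eq_fintype_card, Fintype.card_fin] at hcard
    have := hcard.trans key
    omega
end

section
/- Let G be an α-thin graph, let v be a vertex of G of degree 2, and let G' be obtained from G by suppressing v (replacing the two edges at v by a single edge between their other endpoints, deleting the resulting loop if those endpoints coincide). Then G' is α-thin. -/
/-- The graph obtained from `G` by suppressing the vertex `v` with incident edges
`vu` and `vw`: all edges at `v` are removed and a new edge `uw` is added
(omitted if `u = w`).  The vertex `v` remains, but isolated; the suppressed graph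
is the restriction to the vertex set `{x | x ≠ v}`. -/
def Multigraph.suppress {V : Type u} (G : Multigraph V) (v u w : V) : Multigraph V where
  E := {e : G.E // v ∉ G.ends e} ⊕ PLift (u ≠ w)
  ends := Sum.elim (fun e => G.ends e.1) (fun _ => s(u, w))
  not_diag := by
    rintro (e | h)
    · exact G.not_diag e.1
    · simpa [Sym2.mk_isDiag_iff] using h.down

/-- suppressing a degree-2 vertex of an `α`-thin graph yields an
`α`-thin graph. -/
theorem suppress_isThin {V : Type u} (G : Multigraph V) (α : ℕ) (hα : 0 < α)
    (v u w : V) (e₁ e₂ : G.E) (hne : e₁ ≠ e₂)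
    (h₁ : G.ends e₁ = s(v, u)) (h₂ : G.ends e₂ = s(v, w))
    (hdeg : ∀ e : G.E, v ∈ G.ends e → e = e₁ ∨ e = e₂)
    (hthin : G.IsThin α) :
    (G.suppress v u w).IsThinOn {x | x ≠ v} α := by
  classical
  obtain ⟨n, en, hen⟩ := hthin
  obtain ⟨m, hmv⟩ : ∃ m : Fin n, (en m : V) = v :=
    ⟨en.symm ⟨v, trivial⟩, by simp⟩
  have hnpos : 0 < n := m.pos
  obtain ⟨n', rfl⟩ : ∃ n', n = n' + 1 := ⟨n - 1, by omega⟩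
  have hcoe : ∀ a b : Fin (n' + 1), (en a : V) = (en b : V) → a = b :=
    fun a b h => en.injective (Subtype.ext h)
  have hne' : ∀ j : Fin n', (en (m.succAbove j) : V) ≠ v := by
    intro j h
    exact Fin.succAbove_ne m j (hcoe _ _ (by rw [h, hmv]))
  have hbij : Function.Bijective
      (fun j : Fin n' => (⟨(en (m.succAbove j) : V), hne' j⟩ : {x : V | x ≠ v})) := by
    constructor
    · intro a b h
      have h2 : (en (m.succAbove a) : V) = (en (m.succAbove b) : V) := by
        simpa using congrArg Subtype.val h
      exact (Fin.strictMono_succAbove m).injective (hcoe _ _ h2)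
    · rintro ⟨x, hx⟩
      have hxm : en.symm ⟨x, trivial⟩ ≠ m := by
        intro h
        apply hx
        have h2 : (⟨x, trivial⟩ : (Set.univ : Set V)) = en m := by
          rw [← h, Equiv.apply_symm_apply]
        have := congrArg Subtype.val h2
        simpa [hmv] using this
      obtain ⟨j, hj⟩ := Fin.exists_succAbove_eq hxm
      refine ⟨j, Subtype.ext ?_⟩
      show (en (m.succAbove j) : V) = x
      rw [hj, Equiv.apply_symm_apply]
  refine ⟨n', Equiv.ofBijective _ hbij, fun i => ?_⟩
  set en' : Fin n' ≃ {x : V | x ≠ v} := Equiv.ofBijective _ hbij with hen'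
  have hen'coe : ∀ j : Fin n', (en' j : V) = (en (m.succAbove j) : V) := fun _ => rfl
  set i' : Fin (n' + 1) := m.succAbove i with hi'
  have hvm : i' ≠ m := Fin.succAbove_ne m i
  set ju : Fin (n' + 1) := en.symm ⟨u, trivial⟩ with hju'
  have hju : (en ju : V) = u := congrArg Subtype.val (en.apply_symm_apply _)
  have hlt : ∀ a b : Fin n', a < b → m.succAbove a < m.succAbove b :=
    fun a b h => (Fin.strictMono_succAbove m) h
  have hv1 : v ∈ G.ends e₁ := by rw [h₁]; exact Sym2.mem_mk_left _ _
  have hv2 : v ∈ G.ends e₂ := by rw [h₂]; exact Sym2.mem_mk_left _ _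
  -- the two crossing-edge types
  set T := {e : (G.suppress v u w).E // ∃ j k : Fin n', j < i ∧ i < k ∧
      (G.suppress v u w).ends e = s((en' j : V), (en' k : V))} with hT
  set S := {e : G.E // ∃ j k : Fin (n' + 1), j < i' ∧ i' < k ∧
      G.ends e = s((en j : V), (en k : V))} with hS
  show Nat.card T ≤ α
  -- injection from T to S
  obtain ⟨F, hFl, hFr⟩ : ∃ F : T → S,
      (∀ (e : {e : G.E // v ∉ G.ends e}) ht, ((F ⟨Sum.inl e, ht⟩ : S) : G.E) = e.1) ∧
      (∀ (h : PLift (u ≠ w)) ht, ((F ⟨Sum.inr h, ht⟩ : S) : G.E) = e₁ ∨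
        ((F ⟨Sum.inr h, ht⟩ : S) : G.E) = e₂) := by
    refine ⟨fun t => match t with
      | ⟨Sum.inl e, ht⟩ => ⟨e.1, by
          obtain ⟨j, k, hj, hk, hts⟩ := ht
          refine ⟨m.succAbove j, m.succAbove k, hlt _ _ hj, hlt _ _ hk, ?_⟩
          simpa [Multigraph.suppress, hen'coe] using hts⟩
      | ⟨Sum.inr h, ht⟩ =>
        if hmi : m < i' then
          (if hu : i' < ju then ⟨e₁, by
              obtain ⟨j, k, hj, hk, hts⟩ := ht
              have hts : s(u, w) = s((en (m.succAbove j) : V), (en (m.succAbove k) : V)) := by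
                simpa [Multigraph.suppress, hen'coe] using hts
              rcases Sym2.eq_iff.1 hts with ⟨hu1, hw1⟩ | ⟨hu1, hw1⟩
              · exfalso
                have : ju = m.succAbove j := hcoe _ _ (by rw [hju, hu1])
                rw [this] at hu
                exact absurd (hlt _ _ hj) (lt_asymm hu)
              · refine ⟨m, m.succAbove k, hmi, hlt _ _ hk, ?_⟩
                rw [h₁, ← hmv, hu1]⟩
          else ⟨e₂, by
              obtain ⟨j, k, hj, hk, hts⟩ := ht
              have hts : s(u, w) = s((en (m.succAbove j) : V), (en (m.succAbove k) : V)) := by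
                simpa [Multigraph.suppress, hen'coe] using hts
              rcases Sym2.eq_iff.1 hts with ⟨hu1, hw1⟩ | ⟨hu1, hw1⟩
              · refine ⟨m, m.succAbove k, hmi, hlt _ _ hk, ?_⟩
                rw [h₂, ← hmv, hw1]
              · exfalso
                have : ju = m.succAbove k := hcoe _ _ (by rw [hju, hu1])
                exact hu (this ▸ hlt _ _ hk)⟩)
        else
          (if hu : ju < i' then ⟨e₁, by
              have hmi' : i' < m := lt_of_le_of_ne (le_of_not_gt hmi) hvm
              obtain ⟨j, k, hj, hk, hts⟩ := ht
              have hts : s(u, w) = s((en (m.succAbove j) : V), (en (m.succAbove k) : V)) := by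
                simpa [Multigraph.suppress, hen'coe] using hts
              rcases Sym2.eq_iff.1 hts with ⟨hu1, hw1⟩ | ⟨hu1, hw1⟩
              · refine ⟨m.succAbove j, m, hlt _ _ hj, hmi', ?_⟩
                rw [h₁, ← hmv, hu1, Sym2.eq_swap]
              · exfalso
                have : ju = m.succAbove k := hcoe _ _ (by rw [hju, hu1])
                rw [this] at hu
                exact absurd (hlt _ _ hk) (lt_asymm hu)⟩
          else ⟨e₂, by
              have hmi' : i' < m := lt_of_le_of_ne (le_of_not_gt hmi) hvm
              obtain ⟨j, k, hj, hk, hts⟩ := ht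
              have hts : s(u, w) = s((en (m.succAbove j) : V), (en (m.succAbove k) : V)) := by
                simpa [Multigraph.suppress, hen'coe] using hts
              rcases Sym2.eq_iff.1 hts with ⟨hu1, hw1⟩ | ⟨hu1, hw1⟩
              · exfalso
                have : ju = m.succAbove j := hcoe _ _ (by rw [hju, hu1])
                exact hu (this ▸ hlt _ _ hj)
              · refine ⟨m.succAbove j, m, hlt _ _ hj, hmi', ?_⟩
                rw [h₂, ← hmv, hw1, Sym2.eq_swap]⟩), ?_, ?_⟩
    · intro e ht; rfl
    · intro h ht
      split_ifs <;> simp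
  haveI : Subsingleton (PLift (u ≠ w)) := ⟨fun ⟨a⟩ ⟨b⟩ => rfl⟩
  have hFinj : Function.Injective F := by
    rintro ⟨x | x, hx⟩ ⟨y | y, hy⟩ hxy
    · apply Subtype.ext
      have h1 := hFl x hx
      have h2 := hFl y hy
      have : x.1 = y.1 := by rw [← h1, ← h2, hxy]
      exact congrArg Sum.inl (Subtype.ext this)
    · exfalso
      have h1 := hFl x hx
      rcases hFr y hy with h2 | h2
      · exact x.2 (show v ∈ G.ends x.1 by
          rw [show (x.1 : G.E) = e₁ by rw [← h1, hxy, h2]]; exact hv1)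
      · exact x.2 (show v ∈ G.ends x.1 by
          rw [show (x.1 : G.E) = e₂ by rw [← h1, hxy, h2]]; exact hv2)
    · exfalso
      have h1 := hFl y hy
      rcases hFr x hx with h2 | h2
      · exact y.2 (show v ∈ G.ends y.1 by
          rw [show (y.1 : G.E) = e₁ by rw [← h1, ← hxy, h2]]; exact hv1)
      · exact y.2 (show v ∈ G.ends y.1 by
          rw [show (y.1 : G.E) = e₂ by rw [← h1, ← hxy, h2]]; exact hv2)
    · exact Subtype.ext (congrArg Sum.inr (Subsingleton.elim x y))
  rcases finite_or_infinite S with hfin | hinf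
  · calc Nat.card T ≤ Nat.card S := Nat.card_le_card_of_injective F hFinj
      _ ≤ α := hen i'
  · have hTinf : Infinite T := by
      by_contra hT
      rw [not_infinite_iff_finite] at hT
      have hinc : ∀ e : G.E, (∃ j k : Fin (n' + 1), j < i' ∧ i' < k ∧
          G.ends e = s((en j : V), (en k : V))) → e ≠ e₁ → e ≠ e₂ →
          ∃ t : T, Sum.elim (fun x : {e : G.E // v ∉ G.ends e} => x.1)
            (fun _ => e₁) t.1 = e := by
        intro e he hs1 hs2
        have hvs : v ∉ G.ends e := by
          intro hv
          rcases hdeg e hv with h | h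
          · exact hs1 h
          · exact hs2 h
        obtain ⟨j, k, hj, hk, hts⟩ := he
        have hjm : j ≠ m := by
          intro h
          apply hvs
          rw [hts, ← hmv, h]
          exact Sym2.mem_mk_left _ _
        have hkm : k ≠ m := by
          intro h
          apply hvs
          rw [hts, ← hmv, h]
          exact Sym2.mem_mk_right _ _
        obtain ⟨j0, hj0⟩ := Fin.exists_succAbove_eq hjm
        obtain ⟨k0, hk0⟩ := Fin.exists_succAbove_eq hkm
        refine ⟨⟨Sum.inl ⟨e, hvs⟩, j0, k0, ?_, ?_, ?_⟩, rfl⟩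
        · rw [← Fin.succAbove_lt_succAbove_iff (p := m), hj0]; exact hj
        · rw [← Fin.succAbove_lt_succAbove_iff (p := m), hk0]; exact hk
        · show G.ends e = s((en' j0 : V), (en' k0 : V))
          rw [hen'coe, hen'coe, hj0, hk0]; exact hts
      have hSfin : Finite S := by
        have hr : (Set.range (fun t : T => Sum.elim
            (fun x : {e : G.E // v ∉ G.ends e} => x.1) (fun _ => e₁) t.1)).Finite :=
          Set.finite_range _
        have hsub : {e : G.E | ∃ j k : Fin (n' + 1), j < i' ∧ i' < k ∧
            G.ends e = s((en j : V), (en k : V))} ⊆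
            (Set.range (fun t : T => Sum.elim
              (fun x : {e : G.E // v ∉ G.ends e} => x.1) (fun _ => e₁) t.1)) ∪ {e₁, e₂} := by
          intro e he
          by_cases hs1 : e = e₁
          · exact Or.inr (by simp [hs1])
          by_cases hs2 : e = e₂
          · exact Or.inr (by simp [hs2])
          obtain ⟨t, ht⟩ := hinc e he hs1 hs2
          exact Or.inl ⟨t, ht⟩
        have hfin := (hr.union ((Set.finite_singleton e₂).insert e₁)).subset hsub
        exact hfin.to_subtype
      exact absurd hSfin (by
        intro h
        exact @not_finite S hinf h)
    rw [Nat.card_eq_zero_of_infinite]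
    exact Nat.zero_le α
end

section
/- For every integer α > 0, the graph G obtained from two disjoint stars each with n = 3α + 3 leaves by identifying their leaf sets (so G has two centres, each joined to each of n common middle vertices) is not almost α-thin. -/
/-- The graph on vertex set `{a, b, u_1, …, u_n}` (here `a = 0`, `b = 1`,
`u_i = i + 2`) with edges `a u_i` and `b u_i` for each `i`: two disjoint stars with
`n` leaves each, with their leaf sets identified. -/
def DoubleStar (n : ℕ) : Multigraph (Fin (n + 2)) where
  E := Fin n ⊕ Fin n
  ends := Sum.elim
    (fun i => s((0 : Fin (n + 2)), ⟨i.val + 2, by omega⟩))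
    (fun i => s((1 : Fin (n + 2)), ⟨i.val + 2, by omega⟩))
  not_diag := by
    rintro (i | i) <;>
      simp only [Sum.elim_inl, Sum.elim_inr, Sym2.mk_isDiag_iff, Fin.ext_iff] <;>
      simp <;> omega

/-- for every integer `α > 0`, the graph obtained from two disjoint stars
with `n = 3α + 3` leaves each by identifying their leaves is not almost `α`-thin. -/
theorem doubleStar_not_almostThin (α : ℕ) (hα : 0 < α) :
    ¬ (DoubleStar (3 * α + 3)).AlmostThin α := by
  classical
  set n := 3 * α + 3 with hn
  rintro ⟨X, -, hXcard, hXnbrs, n', en, hthin⟩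
  haveI hEfin : Finite ((DoubleStar n).E) := inferInstanceAs (Finite (Fin n ⊕ Fin n))
  -- 0 is not in X
  have h0X : (0 : Fin (n + 2)) ∉ X := by
    intro h0
    have hle := hXnbrs 0 h0
    have hin : ∀ i : Fin n,
        (⟨i.val + 2, by omega⟩ : Fin (n + 2)) ∈ (DoubleStar n).nbrsIn Set.univ 0 :=
      fun i => ⟨Set.mem_univ _, Sum.inl i, rfl⟩
    have hmany : Nat.card (Fin n) ≤ Nat.card ((DoubleStar n).nbrsIn Set.univ 0) := by
      apply Nat.card_le_card_of_injective (fun i => ⟨⟨i.val + 2, by omega⟩, hin i⟩)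
      intro a b hab
      have := congrArg
        (fun x : ((DoubleStar n).nbrsIn Set.univ 0) => ((x : Fin (n + 2)) : ℕ)) hab
      simp only [Fin.ext_iff] at this ⊢
      omega
    simp only [Nat.card_eq_fintype_card, Fintype.card_fin] at hmany hle
    omega
  have h0S : (0 : Fin (n + 2)) ∈ Set.univ \ X := ⟨Set.mem_univ _, h0X⟩
  -- count of middle vertices surviving
  have hXn : X.ncard ≤ α := by
    rw [← Nat.card_coe_set_eq]; exact hXcard
  have hMid : ({v : Fin (n + 2) | 2 ≤ v.val}).ncard = n := by
    rw [← Nat.card_coe_set_eq]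
    have e : {v : Fin (n + 2) | 2 ≤ v.val} ≃ Fin n :=
      { toFun := fun v => ⟨v.1.val - 2, by have := v.1.isLt; have := v.2; omega⟩
        invFun := fun i => ⟨⟨i.val + 2, by omega⟩, by simp⟩
        left_inv := fun v => by
          have h2 := v.2
          apply Subtype.ext; apply Fin.ext
          simp only [Set.mem_setOf_eq] at h2
          simp only []
          omega
        right_inv := fun i => by apply Fin.ext; simp }
    rw [Nat.card_congr e, Nat.card_eq_fintype_card, Fintype.card_fin]
  have hMX : 2 * α + 3 ≤ Nat.card ↥({v : Fin (n + 2) | 2 ≤ v.val} \ X) := by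
    have h2 := Set.ncard_le_ncard_diff_add_ncard {v : Fin (n + 2) | 2 ≤ v.val} X X.toFinite
    rw [Nat.card_coe_set_eq]
    omega
  -- positions of surviving middle vertices
  have hpos : 2 * α + 3 ≤ Nat.card {i : Fin n' // 2 ≤ ((en i : Fin (n + 2)) : ℕ)} := by
    refine le_trans hMX (Nat.card_le_card_of_injective
      (fun v => ⟨en.symm ⟨v.1, Set.mem_univ _, v.2.2⟩, by
        have := v.2.1
        simp only [Set.mem_setOf_eq] at this
        simpa using this⟩) ?_)
    intro a b hab
    have h1 : en.symm ⟨a.1, Set.mem_univ _, a.2.2⟩ = en.symm ⟨b.1, Set.mem_univ _, b.2.2⟩ :=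
      congrArg Subtype.val hab
    have h2 := en.symm.injective h1
    have h3 : (a.1 : Fin (n + 2)) = b.1 :=
      congrArg (fun s : ↥(Set.univ \ X) => (s : Fin (n + 2))) h2
    exact Subtype.ext h3
  let Pf : Finset (Fin n') := Finset.univ.filter (fun i => 2 ≤ ((en i : Fin (n + 2)) : ℕ))
  have hPf : 2 * α + 3 ≤ Pf.card := by
    have : Pf.card = Nat.card {i : Fin n' // 2 ≤ ((en i : Fin (n + 2)) : ℕ)} := by
      rw [Nat.card_eq_fintype_card, Fintype.card_subtype]
    omega
  let σ := Pf.orderIsoOfFin rfl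
  have hmemP : ∀ x : Fin Pf.card, 2 ≤ ((en (σ x : Fin n') : Fin (n + 2)) : ℕ) := by
    intro x
    have := (σ x).2
    simp only [Pf, Finset.mem_filter] at this
    exact this.2
  let i' : Fin n' := (σ ⟨α + 1, by omega⟩ : Fin n')
  have hi'mid : 2 ≤ ((en i' : Fin (n + 2)) : ℕ) := hmemP _
  let i0 : Fin n' := en.symm ⟨0, h0S⟩
  have hi0 : ((en i0 : Fin (n + 2))) = 0 := by
    show ((en (en.symm ⟨0, h0S⟩) : Fin (n + 2))) = 0
    rw [Equiv.apply_symm_apply]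
  have hne : i0 ≠ i' := by
    intro h
    rw [← h, hi0] at hi'mid
    simp at hi'mid
  -- key counting lemma
  have key : ∀ K : Fin (α + 1) → Fin n', Function.Injective K →
      (∀ j, 2 ≤ ((en (K j) : Fin (n + 2)) : ℕ)) →
      (∀ j, (i0 < i' ∧ i' < K j) ∨ (K j < i' ∧ i' < i0)) → False := by
    intro K hKinj hKmid hKside
    have hcard := hthin i'
    have hends : ∀ j : Fin (α + 1),
        (DoubleStar n).ends (Sum.inl ⟨((en (K j) : Fin (n + 2)) : ℕ) - 2,
          by have := (en (K j) : Fin (n + 2)).isLt; have := hKmid j; omega⟩) =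
        s((0 : Fin (n + 2)), (en (K j) : Fin (n + 2))) := by
      intro j
      show s((0 : Fin (n + 2)),
        (⟨(((en (K j) : Fin (n + 2)) : ℕ) - 2) + 2,
          by have := (en (K j) : Fin (n + 2)).isLt; omega⟩ : Fin (n + 2))) =
        s((0 : Fin (n + 2)), (en (K j) : Fin (n + 2)))
      rw [Sym2.congr_right]
      apply Fin.ext
      have := hKmid j
      have := (en (K j) : Fin (n + 2)).isLt
      simp only []
      omega
    have hineq : α + 1 ≤ Nat.card {e : (DoubleStar n).E // ∃ j k : Fin n', j < i' ∧ i' < k ∧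
        (DoubleStar n).ends e = s((en j : Fin (n + 2)), (en k : Fin (n + 2)))} := by
      have := Nat.card_le_card_of_injective
        (f := fun j : Fin (α + 1) =>
          (⟨Sum.inl ⟨((en (K j) : Fin (n + 2)) : ℕ) - 2,
            by have := (en (K j) : Fin (n + 2)).isLt; have := hKmid j; omega⟩, by
            rcases hKside j with ⟨h1, h2⟩ | ⟨h1, h2⟩
            · exact ⟨i0, K j, h1, h2, by rw [hends j, hi0]⟩
            · exact ⟨K j, i0, h1, h2, by rw [hends j, hi0, Sym2.eq_swap]⟩⟩ :
            {e : (DoubleStar n).E // ∃ j k : Fin n', j < i' ∧ i' < k ∧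
              (DoubleStar n).ends e = s((en j : Fin (n + 2)), (en k : Fin (n + 2)))}))
        ?_
      · simpa using this
      · intro a b hab
        have h1 : (((en (K a) : Fin (n + 2)) : ℕ) - 2 : ℕ) =
            ((en (K b) : Fin (n + 2)) : ℕ) - 2 := by
          have h0 := congrArg Subtype.val hab
          have h1 : (Sum.inl (⟨((en (K a) : Fin (n + 2)) : ℕ) - 2,
              by have := (en (K a) : Fin (n + 2)).isLt; have := hKmid a; omega⟩ : Fin n) :
              Fin n ⊕ Fin n) = Sum.inl ⟨((en (K b) : Fin (n + 2)) : ℕ) - 2,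
              by have := (en (K b) : Fin (n + 2)).isLt; have := hKmid b; omega⟩ := h0
          exact congrArg Fin.val (Sum.inl_injective h1)
        have ha := hKmid a
        have hb := hKmid b
        have hKv : (en (K a) : Fin (n + 2)) = (en (K b) : Fin (n + 2)) := by
          apply Fin.ext; omega
        exact hKinj (en.injective (Subtype.ext hKv))
    omega
  rcases lt_or_gt_of_ne hne with hlt | hgt
  · -- i0 < i' : take middles above i'
    refine key (fun j => (σ ⟨α + 2 + j.val, by have := j.isLt; omega⟩ : Fin n'))
      ?_ (fun j => hmemP _) ?_
    · intro a b hab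
      have := σ.injective (Subtype.ext hab)
      simpa [Fin.ext_iff] using congrArg Fin.val this
    · intro j
      left
      refine ⟨hlt, ?_⟩
      have : (⟨α + 1, by omega⟩ : Fin Pf.card) < ⟨α + 2 + j.val, by have := j.isLt; omega⟩ := by
        simp only [Fin.mk_lt_mk]; omega
      have := σ.lt_iff_lt.mpr this
      exact this
  · -- i' < i0 : take middles below i'
    refine key (fun j => (σ ⟨j.val, by have := j.isLt; omega⟩ : Fin n'))
      ?_ (fun j => hmemP _) ?_
    · intro a b hab
      have := σ.injective (Subtype.ext hab)
      simpa [Fin.ext_iff] using congrArg Fin.val this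
    · intro j
      right
      refine ⟨?_, hgt⟩
      have : (⟨j.val, by have := j.isLt; omega⟩ : Fin Pf.card) < ⟨α + 1, by omega⟩ := by
        simp only [Fin.mk_lt_mk]; exact j.isLt
      exact σ.lt_iff_lt.mpr this
end

section
/- For every two integers k, n > 0, the graph S_{k,n} contains every graph on n vertices with maximum degree at most k as a strong immersion minor. -/
/-- for all `k, n > 0`, the graph `S_{k,n}` contains every graph on `n`
vertices with maximum degree at most `k` as a strong immersion minor. -/
theorem spider_contains_all (k n : ℕ) (hk : 0 < k) (hn : 0 < n)
    (H : Multigraph (Fin n)) [Finite H.E]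
    (hdeg : ∀ v : Fin n, H.degree v ≤ k) :
    H.StrongImmersion (Spider k n) := by
  classical
  -- endpoints of each edge
  set u : H.E → Fin n := fun e => (H.ends e).out.1 with hu_def
  set v : H.E → Fin n := fun e => (H.ends e).out.2 with hv_def
  have hends : ∀ e, H.ends e = s(u e, v e) := fun e => ((H.ends e).out_eq).symm
  have huv : ∀ e, u e ≠ v e := by
    intro e h
    apply H.not_diag e
    rw [hends e, Sym2.mk_isDiag_iff]
    exact h
  have hmemu : ∀ e, u e ∈ H.ends e := by
    intro e; rw [hends e]; exact Sym2.mem_mk_left _ _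
  have hmemv : ∀ e, v e ∈ H.ends e := by
    intro e; rw [hends e]; exact Sym2.mem_mk_right _ _
  -- for each vertex, an injective colouring of incident edges
  have hcol : ∀ w : Fin n, Nonempty ({e : H.E // w ∈ H.ends e} ↪ Fin k) := by
    intro w
    haveI := Fintype.ofFinite {e : H.E // w ∈ H.ends e}
    apply Function.Embedding.nonempty_of_card_le
    rw [Fintype.card_fin, ← Nat.card_eq_fintype_card]
    exact hdeg w
  have g : ∀ w : Fin n, {e : H.E // w ∈ H.ends e} ↪ Fin k := fun w => (hcol w).some
  -- spider edges used by the path of edge e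
  set d₁ : H.E → (Spider k n).E := fun e => (u e, g (u e) ⟨e, hmemu e⟩) with hd1
  set d₂ : H.E → (Spider k n).E := fun e => (v e, g (v e) ⟨e, hmemv e⟩) with hd2
  have h1 : ∀ e, (Spider k n).ends (d₁ e) = s((u e).succ, (0 : Fin (n+1))) := by
    intro e; exact Sym2.eq_swap
  have h2 : ∀ e, (Spider k n).ends (d₂ e) = s((0 : Fin (n+1)), (v e).succ) := fun _ => rfl
  refine ⟨Fin.succ, fun e => (u e).succ, fun e => (v e).succ,
    fun e => .cons (d₁ e) (h1 e) (.cons (d₂ e) (h2 e) (.nil _)),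
    Fin.succ_injective n, ?_, ?_, ?_, ?_⟩
  · intro e
    rw [hends e, Sym2.map_pair_eq]
  · intro e
    simp only [Multigraph.Walk.IsPath, Multigraph.Walk.support]
    refine List.nodup_cons.2 ⟨?_, List.nodup_cons.2 ⟨?_, List.nodup_singleton _⟩⟩
    · simp only [List.mem_cons, List.mem_singleton, List.not_mem_nil]
      push_neg
      exact ⟨(Fin.succ_ne_zero _), fun h => huv e (Fin.succ_injective n h), trivial⟩
    · simp only [List.mem_singleton]
      exact fun h => Fin.succ_ne_zero _ h.symm
  · intro e e' hne d hd hd'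
    have key : ∀ a : H.E, ∀ c, c ∈ (Multigraph.Walk.cons (d₁ a) (h1 a)
        (Multigraph.Walk.cons (d₂ a) (h2 a) (.nil _))).edgeList →
        ∃ h : c.1 ∈ H.ends a, c.2 = g c.1 ⟨a, h⟩ := by
      intro a c hc
      simp only [Multigraph.Walk.edgeList, List.mem_cons, List.not_mem_nil, or_false] at hc
      rcases hc with rfl | rfl
      · exact ⟨hmemu a, rfl⟩
      · exact ⟨hmemv a, rfl⟩
    obtain ⟨he, hce⟩ := key e d hd
    obtain ⟨he', hce'⟩ := key e' d hd'
    apply hne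
    have := (g d.1).injective (hce ▸ hce' ▸ rfl : g d.1 ⟨e, he⟩ = g d.1 ⟨e', he'⟩)
    exact congrArg Subtype.val this
  · intro e x hx hxa hxb hxr
    simp only [Multigraph.Walk.support, List.mem_cons, List.not_mem_nil, or_false,
      List.mem_singleton] at hx
    rcases hx with rfl | rfl | rfl
    · exact hxa rfl
    · obtain ⟨w, hw⟩ := hxr
      exact Fin.succ_ne_zero w hw
    · exact hxb rfl
end

section
/- For every integer k > 0, deleting every third edge of the path P_{3k−1} in the graph P_{3k−1} * v yields a subdivision of S_{3,k}; in particular, P_{3k−1} * v contains a subdivision of S_{3,k} as a subgraph. -/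
/-- The graph `P_n * v`: a path with vertices `0, 1, …, n` (of length `n`) together with
an apex vertex `n + 1` adjacent to every vertex of the path. -/
def PathApex (n : ℕ) : SimpleGraph (Fin (n + 2)) where
  Adj i j :=
    ((i.val + 1 = j.val ∨ j.val + 1 = i.val) ∧ i.val ≤ n ∧ j.val ≤ n) ∨
    (i.val = n + 1 ∧ j.val ≤ n) ∨ (j.val = n + 1 ∧ i.val ≤ n)
  symm := ⟨by intro i j h; tauto⟩
  loopless := ⟨by
    intro i h
    rcases h with ⟨h1, h2, h3⟩ | ⟨h1, h2⟩ | ⟨h1, h2⟩ <;> omega⟩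


section SpiderAux

open Multigraph

/-- Single-edge walk in the multigraph of a simple graph. -/
def walk1 {V : Type*} (G : SimpleGraph V) {u v : V} (h : G.Adj u v) :
    G.toMultigraph.Walk u v :=
  .cons ⟨s(u, v), G.mem_edgeSet.2 h⟩ rfl (.nil v)

/-- Two-edge walk in the multigraph of a simple graph. -/
def walk2 {V : Type*} (G : SimpleGraph V) {u v w : V} (h1 : G.Adj u v) (h2 : G.Adj v w) :
    G.toMultigraph.Walk u w :=
  .cons ⟨s(u, v), G.mem_edgeSet.2 h1⟩ rfl (walk1 G h2)

/-- The apex vertex. -/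
def spApex (k : ℕ) : Fin (3 * k - 1 + 2) := ⟨3 * k, by omega⟩

/-- Branch vertices on the path. -/
def spMid (k : ℕ) (i : Fin k) : Fin (3 * k - 1 + 2) :=
  ⟨3 * i.val + 1, by have := i.isLt; omega⟩

/-- The embedding of the vertices. -/
def spF (k : ℕ) (j : Fin (k + 1)) : Fin (3 * k - 1 + 2) :=
  if j.val = 0 then ⟨3 * k, by omega⟩
  else ⟨3 * (j.val - 1) + 1, by have := j.isLt; omega⟩

lemma spF_val (k : ℕ) (j : Fin (k + 1)) :
    (spF k j).val = 3 * k ∨ ∃ m < k, (spF k j).val = 3 * m + 1 := by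
  unfold spF; split
  · left; rfl
  · right; exact ⟨j.val - 1, by have := j.isLt; omega, rfl⟩

lemma adjA (k : ℕ) (hk : 0 < k) (m : ℕ) (h : m < 3 * k - 1 + 2) (hm : m ≤ 3 * k - 1) :
    (PathApex (3 * k - 1)).Adj ⟨3 * k, by omega⟩ ⟨m, h⟩ := by
  refine Or.inr (Or.inl ⟨?_, ?_⟩) <;> simp <;> omega

lemma adjP (k m : ℕ) (h1 : m + 1 ≤ 3 * k - 1) :
    (PathApex (3 * k - 1)).Adj ⟨m, by omega⟩ ⟨m + 1, by omega⟩ := by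
  refine Or.inl ⟨Or.inl ?_, ?_, ?_⟩ <;> simp <;> omega

/-- The three paths from the apex to the branch vertex `3i+1`. -/
def spWalk (k : ℕ) (hk : 0 < k) (i : Fin k) :
    Fin 3 → (PathApex (3 * k - 1)).toMultigraph.Walk (spApex k) (spMid k i)
  | ⟨0, _⟩ => walk1 _ (adjA k hk (3 * i.val + 1) (by have := i.isLt; omega)
      (by have := i.isLt; omega))
  | ⟨1, _⟩ => walk2 _ (adjA k hk (3 * i.val) (by have := i.isLt; omega)
      (by have := i.isLt; omega)) (adjP k (3 * i.val) (by have := i.isLt; omega))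
  | ⟨2, _⟩ => walk2 _ (adjA k hk (3 * i.val + 2) (by have := i.isLt; omega)
      (by have := i.isLt; omega)) ((adjP k (3 * i.val + 1) (by have := i.isLt; omega)).symm)

end SpiderAux

/-- for every `k > 0`, the graph `P_{3k-1} * v` contains a subdivision of
`S_{3,k}` as a subgraph. -/
theorem pathApex_contains_spider_subdivision (k : ℕ) (hk : 0 < k) :
    (Spider 3 k).TopEmbedding ((PathApex (3 * k - 1)).toMultigraph) := by
  refine ⟨spF k, fun _ => spApex k, fun e => spMid k e.1, fun e => spWalk k hk e.1 e.2,
    ?_, ?_, ?_, ?_, ?_, ?_⟩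
  · -- injectivity
    intro j j' hjj
    have := j.isLt; have := j'.isLt
    simp only [spF] at hjj
    split at hjj <;> split at hjj <;>
      (rw [Fin.mk.injEq] at hjj; apply Fin.ext) <;> omega
  · -- ends map correctly
    rintro ⟨i, t⟩
    have hi := i.isLt
    show Sym2.map _ s(0, i.succ) = _
    rw [Sym2.map_pair_eq]
    have h0 : spF k 0 = spApex k := by simp [spF, spApex]
    have h1 : spF k i.succ = spMid k i := by
      simp [spF, spMid, Fin.ext_iff]
    rw [h0, h1]
  · -- each walk is a path
    rintro ⟨i, t⟩
    have hi := i.isLt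
    fin_cases t <;>
      simp [spWalk, walk1, walk2, Multigraph.Walk.IsPath, Multigraph.Walk.support,
        spApex, spMid, Fin.ext_iff] <;> omega
  · -- edge-disjoint
    rintro ⟨i, t⟩ ⟨i', t'⟩ hne d hd hd'
    have hi := i.isLt; have hi' := i'.isLt
    have hne' : i.val ≠ i'.val ∨ t ≠ t' := by
      by_contra h
      push_neg at h
      exact hne (Prod.ext (Fin.ext h.1) h.2)
    clear hne
    fin_cases t <;> fin_cases t' <;>
      simp only [spWalk, walk1, walk2, Multigraph.Walk.edgeList, List.mem_cons,
        List.mem_singleton, List.not_mem_nil, or_false] at hd hd' <;>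
      (rcases hd with _ | ⟨_, _ | ⟨_, ⟨⟩⟩⟩) <;>
      (rcases List.mem_cons.1 hd' with hd' | hd' <;> (try rcases List.mem_cons.1 hd' with hd' | hd') <;>
        (try exact absurd hd' List.not_mem_nil)) <;>
      simp_all [SimpleGraph.toMultigraph, Subtype.mk.injEq, Sym2.eq_iff, spApex, spMid,
        Fin.ext_iff] <;>
      omega
  · -- internally disjoint
    rintro ⟨i, t⟩ ⟨i', t'⟩ hne x hx hx'
    have hi := i.isLt; have hi' := i'.isLt
    have hne' : i.val ≠ i'.val ∨ t ≠ t' := by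
      by_contra h
      push_neg at h
      exact hne (Prod.ext (Fin.ext h.1) h.2)
    clear hne
    fin_cases t <;> fin_cases t' <;>
      simp_all [spWalk, walk1, walk2, Multigraph.Walk.support, Prod.ext_iff,
        spApex, spMid, Fin.ext_iff] <;> omega
  · -- internal vertices avoid branch vertices
    rintro ⟨i, t⟩ x hx hxa hxb ⟨j, hj⟩
    have hi := i.isLt
    have hv := spF_val k j
    rw [hj] at hv
    fin_cases t <;>
      simp_all [spWalk, walk1, walk2, Multigraph.Walk.support,
        spApex, spMid, Fin.ext_iff] <;> omega
end

section
/- For every two integers ℓ ≥ 2 and α > 0, there exists a graph G (namely the star K_{1,n} with n = α(3α + 3)) such that G does not contain the wall W_ℓ as a strong immersion minor, and G does not admit any tree-cut decomposition of adhesion at most α all of whose torsos are almost α-thin. -/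
/-- Grid adjacency on 1-based coordinates `(i, j)`. -/
def gridAdj (p q : ℕ × ℕ) : Prop :=
  (p.2 = q.2 ∧ (p.1 + 1 = q.1 ∨ q.1 + 1 = p.1)) ∨
  (p.1 = q.1 ∧ (p.2 + 1 = q.2 ∨ q.2 + 1 = p.2))

/-- The edges `(i,j)(i',j')` with `j = j'`, `i = i' + 1` and `j ≡ i (mod 2)`,
deleted from the grid to form the wall. -/
def deletedEdge (p q : ℕ × ℕ) : Prop :=
  p.2 = q.2 ∧ ((p.1 = q.1 + 1 ∧ p.2 % 2 = p.1 % 2) ∨ (q.1 = p.1 + 1 ∧ q.2 % 2 = q.1 % 2))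

/-- Vertices of the `l × 2l` grid: pairs `(i, j)` with `1 ≤ i ≤ 2l`, `1 ≤ j ≤ l`. -/
def WallVert (l : ℕ) : Type := {p : ℕ × ℕ // 1 ≤ p.1 ∧ p.1 ≤ 2 * l ∧ 1 ≤ p.2 ∧ p.2 ≤ l}

/-- The `l × 2l` grid with the edges `deletedEdge` removed. -/
def preWall (l : ℕ) : SimpleGraph (WallVert l) where
  Adj p q := gridAdj p.1 q.1 ∧ ¬ deletedEdge p.1 q.1
  symm := by
    constructor
    rintro p q ⟨h1, h2⟩
    exact ⟨by unfold gridAdj at *; tauto, by unfold deletedEdge at *; tauto⟩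
  loopless := by constructor; rintro p ⟨h, -⟩; unfold gridAdj at h; omega

/-- The vertices remaining after removing the (two) vertices of degree at most 1. -/
def wallKeep (l : ℕ) : Set (WallVert l) := {v | 2 ≤ ((preWall l).neighborSet v).ncard}

/-- The wall `W_l` of size `l`. -/
def Wall (l : ℕ) : SimpleGraph (wallKeep l) := (preWall l).induce (wallKeep l)

/-- A tree-cut decomposition of `G`: a tree `T` together with a near-partition of the
vertices of `G` into (possibly empty) parts indexed by the nodes of `T`. -/
structure TreeCutDecomp {V : Type u} {N : Type w} (G : Multigraph V) (T : SimpleGraph N) where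
  isTree : T.IsTree
  part : N → Set V
  pairwise_disjoint : ∀ s t : N, s ≠ t → Disjoint (part s) (part t)
  covers : ∀ v : V, ∃ t : N, v ∈ part t

namespace TreeCutDecomp

variable {V : Type u} {N : Type w} {G : Multigraph V} {T : SimpleGraph N}

/-- The vertices of `G` living in parts on the `t₁`-side of the tree edge `t₁t₂`. -/
def vertexSide (D : TreeCutDecomp G T) (t₁ t₂ : N) : Set V :=
  {v | ∃ t : N, (T.deleteEdges {s(t₁, t₂)}).Reachable t₁ t ∧ v ∈ D.part t}

/-- The adhesion set of the tree edge `t₁t₂`: the edges of `G` joining the two sides. -/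
def adhesionSet (D : TreeCutDecomp G T) (t₁ t₂ : N) : Set G.E :=
  {e | G.edgeBetween e (D.vertexSide t₁ t₂) (D.vertexSide t₂ t₁)}

/-- The decomposition has adhesion at most `α`. -/
def AdhesionLE (D : TreeCutDecomp G T) (α : ℕ) : Prop :=
  ∀ t₁ t₂ : N, T.Adj t₁ t₂ → Nat.card (D.adhesionSet t₁ t₂) ≤ α

/-- The components of `T - t`, indexing the peripheral vertices of the torso at `t`. -/
def CompAt (T : SimpleGraph N) (t : N) : Type w :=
  (T.induce {x : N | x ≠ t}).ConnectedComponent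

/-- Some node whose part contains `v`. -/
noncomputable def nodeOf (D : TreeCutDecomp G T) (v : V) : N := (D.covers v).choose

lemma mem_part_nodeOf (D : TreeCutDecomp G T) (v : V) : v ∈ D.part (D.nodeOf v) :=
  (D.covers v).choose_spec

/-- The identification map from `G` to the torso at `t`: core vertices (those in the part
at `t`) are kept, and all vertices in parts of a fixed component of `T - t` are identified
to a single peripheral vertex. -/
noncomputable def torsoMap (D : TreeCutDecomp G T) (t : N) (v : V) :
    ↥(D.part t) ⊕ CompAt T t :=
  letI := Classical.dec (v ∈ D.part t)
  if h : v ∈ D.part t then Sum.inl ⟨v, h⟩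
  else Sum.inr ((T.induce {x : N | x ≠ t}).connectedComponentMk
    ⟨D.nodeOf v, fun ht : D.nodeOf v = t => h (ht ▸ D.mem_part_nodeOf v)⟩)

/-- The torso of the decomposition at the node `t`, keeping parallel edges and omitting
loops.  Vertices of the form `Sum.inl _` are the core vertices, those of the form
`Sum.inr _` are the peripheral vertices. -/
noncomputable def torso (D : TreeCutDecomp G T) (t : N) :
    Multigraph (↥(D.part t) ⊕ CompAt T t) :=
  G.contractMap (D.torsoMap t)

end TreeCutDecomp



/-! ### Auxiliary lemmas -/

section Helpers

namespace Multigraph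

variable {V : Type u} {G : Multigraph V}

lemma Walk.exists_first_edge {u w : V} (p : G.Walk u w) (h : u ≠ w) :
    ∃ d ∈ p.edgeList, u ∈ G.ends d := by
  cases p with
  | nil => exact absurd rfl h
  | cons e he q =>
    exact ⟨e, List.mem_cons_self, by rw [he]; exact Sym2.mem_mk_left _ _⟩

lemma Walk.exists_last_edge {u w : V} (p : G.Walk u w) (h : u ≠ w) :
    ∃ d ∈ p.edgeList, w ∈ G.ends d := by
  induction p with
  | nil v => exact absurd rfl h
  | @cons u v w e he q ih =>
    by_cases hvw : v = w
    · subst hvw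
      exact ⟨e, List.mem_cons_self, by rw [he]; exact Sym2.mem_mk_right _ _⟩
    · obtain ⟨d, hd, hdm⟩ := ih hvw
      exact ⟨d, List.mem_cons_of_mem _ hd, hdm⟩

end Multigraph

/-- In a star, two distinct vertices each incident with two distinct edges of `H`
prevent a strong immersion of `H`. -/
lemma star_leaf_conflict {n : ℕ} {W' : Type w} (H : Multigraph W')
    (hsi : Multigraph.StrongImmersion H (StarMG n))
    (u v : W') (huv : u ≠ v)
    (e1 e2 : H.E) (h12 : e1 ≠ e2)
    (e3 e4 : H.E) (h34 : e3 ≠ e4)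
    (hu1 : u ∈ H.ends e1) (hu2 : u ∈ H.ends e2)
    (hv3 : v ∈ H.ends e3) (hv4 : v ∈ H.ends e4) : False := by
  obtain ⟨f, a, b, P, hinj, hends, hpath, hdisj, -⟩ := hsi
  have key : ∀ (x : W') (_ : f x ≠ 0) (e : H.E) (_ : x ∈ H.ends e),
      ∃ d ∈ (P e).edgeList, f x ∈ (StarMG n).ends d := by
    intro x hx e hxe
    obtain ⟨y, hy⟩ := Sym2.mem_iff_exists.mp hxe
    have hxy : x ≠ y := by
      intro hEq
      exact H.not_diag e (by rw [hy, Sym2.mk_isDiag_iff]; exact hEq)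
    have hmap := hends e
    rw [hy, Sym2.map_pair_eq] at hmap
    have hfxy : f x ≠ f y := fun hc => hxy (hinj hc)
    have hab : a e ≠ b e := by
      rcases Sym2.eq_iff.mp hmap with ⟨h1, h2⟩ | ⟨h1, h2⟩
      · rw [← h1, ← h2]; exact hfxy
      · rw [← h1, ← h2]; exact hfxy.symm
    rcases Sym2.eq_iff.mp hmap with ⟨h1, -⟩ | ⟨h2, -⟩
    · obtain ⟨d, hd, hdm⟩ := (P e).exists_first_edge hab
      exact ⟨d, hd, h1 ▸ hdm⟩
    · obtain ⟨d, hd, hdm⟩ := (P e).exists_last_edge hab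
      exact ⟨d, hd, h2 ▸ hdm⟩
  have conflict : ∀ (x : W') (_ : f x ≠ 0) (ea eb : H.E) (_ : ea ≠ eb)
      (_ : x ∈ H.ends ea) (_ : x ∈ H.ends eb), False := by
    intro x hx ea eb hab hxa hxb
    obtain ⟨d1, hd1, hm1⟩ := key x hx ea hxa
    obtain ⟨d2, hd2, hm2⟩ := key x hx eb hxb
    have hend : ∀ d : Fin n, (StarMG n).ends d = s(0, d.succ) := fun _ => rfl
    change f x ∈ s(0, Fin.succ d1) at hm1; change f x ∈ s(0, Fin.succ d2) at hm2
    have h1 : f x = d1.succ := by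
      rcases Sym2.mem_iff.mp hm1 with h | h
      · exact absurd h hx
      · exact h
    have h2 : f x = d2.succ := by
      rcases Sym2.mem_iff.mp hm2 with h | h
      · exact absurd h hx
      · exact h
    have hdd : d1 = d2 := Fin.succ_injective _ (h1 ▸ h2)
    exact hdisj ea eb hab d1 hd1 (hdd ▸ hd2)
  by_cases hu0 : f u = 0
  · have hv0 : f v ≠ 0 := fun hv0 => huv (hinj (hu0.trans hv0.symm))
    exact conflict v hv0 e3 e4 h34 hv3 hv4
  · exact conflict u hu0 e1 e2 h12 hu1 hu2

instance wallVertFinite (l : ℕ) : Finite (WallVert l) := by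
  apply Finite.of_injective
    (fun p : WallVert l =>
      ((⟨p.1.1, by obtain ⟨h1, h2, h3, h4⟩ := p.2; omega⟩ : Fin (2 * l + 1)),
       (⟨p.1.2, by obtain ⟨h1, h2, h3, h4⟩ := p.2; omega⟩ : Fin (l + 1))))
  intro p q h
  rw [Prod.mk.injEq] at h
  obtain ⟨h1, h2⟩ := h
  exact Subtype.ext (Prod.ext (congrArg Fin.val h1) (congrArg Fin.val h2))

lemma mem_wallKeep_of_two {l : ℕ} {v a b : WallVert l} (hab : a ≠ b)
    (ha : (preWall l).Adj v a) (hb : (preWall l).Adj v b) : v ∈ wallKeep l := by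
  have hsub : ({a, b} : Set (WallVert l)) ⊆ (preWall l).neighborSet v := by
    rintro x (rfl | rfl)
    · exact ha
    · exact hb
  calc (2 : ℕ) = ({a, b} : Set (WallVert l)).ncard := (Set.ncard_pair hab).symm
    _ ≤ ((preWall l).neighborSet v).ncard := Set.ncard_le_ncard hsub (Set.toFinite _)

/-- Constructor for wall vertices. -/
def mkWV (l i j : ℕ) (h1 : 1 ≤ i) (h2 : i ≤ 2 * l) (h3 : 1 ≤ j) (h4 : j ≤ l) :
    WallVert l := ⟨(i, j), h1, h2, h3, h4⟩

@[simp] lemma mkWV_val (l i j : ℕ) (h1 h2 h3 h4) :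
    (mkWV l i j h1 h2 h3 h4).1 = (i, j) := rfl

lemma mkWV_ne {l i j i' j' : ℕ} {h1 h2 h3 h4 h1' h2' h3' h4'}
    (h : i ≠ i' ∨ j ≠ j') :
    mkWV l i j h1 h2 h3 h4 ≠ mkWV l i' j' h1' h2' h3' h4' := by
  intro hEq
  have hv := congrArg Subtype.val hEq
  rcases h with h | h
  · exact h (congrArg Prod.fst hv)
  · exact h (congrArg Prod.snd hv)

section Part2

variable {N : Type} {T : SimpleGraph N}

lemma reachable_induce_of_walk {t : N} : ∀ {a b : N} (w : T.Walk a b),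
    (∀ x ∈ w.support, x ≠ t) → ∀ (ha : a ≠ t) (hb : b ≠ t),
    (T.induce {x : N | x ≠ t}).Reachable ⟨a, ha⟩ ⟨b, hb⟩ := by
  intro a b w
  induction w with
  | nil => intro _ ha hb; rfl
  | @cons a c b h p ih =>
    intro hsup ha hb
    have hc : c ≠ t := hsup c (by simp [SimpleGraph.Walk.support_cons])
    have hadj : (T.induce {x : N | x ≠ t}).Adj ⟨a, ha⟩ ⟨c, hc⟩ := by
      simpa using h
    exact (hadj.reachable).trans (ih (fun x hx => hsup x (by
      simp [SimpleGraph.Walk.support_cons, hx])) hc hb)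

lemma reachable_delete_of_induce_walk {t s : N} :
    ∀ {a b : {x : N // x ≠ t}} (_ : (T.induce {x : N | x ≠ t}).Walk a b),
    (T.deleteEdges {s(s, t)}).Reachable a.1 b.1 := by
  intro a b w
  induction w with
  | nil => rfl
  | @cons a c b h p ih =>
    refine (SimpleGraph.Adj.reachable ?_).trans ih
    rw [SimpleGraph.deleteEdges_adj]
    refine ⟨by simpa using h, ?_⟩
    intro hmem
    rw [Set.mem_singleton_iff] at hmem
    rcases Sym2.eq_iff.mp hmem with ⟨-, h2⟩ | ⟨h1, -⟩
    · exact c.2 h2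
    · exact a.2 h1

lemma exists_adj_comp (hT : T.Connected) (t : N)
    (C : (T.induce {x : N | x ≠ t}).ConnectedComponent) :
    ∃ (s : N) (hs : s ≠ t), T.Adj t s ∧
      (T.induce {x : N | x ≠ t}).connectedComponentMk ⟨s, hs⟩ = C := by
  classical
  refine SimpleGraph.ConnectedComponent.ind ?_ C
  rintro ⟨u, hu⟩
  obtain ⟨w⟩ := hT.preconnected t u
  have hp := w.bypass_isPath
  have hu' : u ≠ t := hu
  cases hw : w.bypass with
  | nil => exact absurd rfl hu'
  | cons h q =>
    rw [hw, SimpleGraph.Walk.cons_isPath_iff] at hp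
    obtain ⟨hq, ht⟩ := hp
    have hall : ∀ x ∈ q.support, x ≠ t := fun x hx hxt => ht (hxt ▸ hx)
    have hs : _ ≠ t := hall _ q.start_mem_support
    exact ⟨_, hs, h, SimpleGraph.ConnectedComponent.sound
      (reachable_induce_of_walk q hall hs hu')⟩

lemma star_decomp_bad {n α : ℕ} (hα : 0 < α) (hn : n = α * (3 * α + 3))
    (hN : Finite N) (D : TreeCutDecomp (StarMG n) T) (hD : D.AdhesionLE α) :
    ∃ t : N, ¬ (D.torso t).AlmostThin α := by
  classical
  haveI := hN
  haveI hFE : Finite ((StarMG n).E) := inferInstanceAs (Finite (Fin n))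
  set t₀ := D.nodeOf 0 with ht₀
  have h0 : (0 : Fin (n + 1)) ∈ D.part t₀ := D.mem_part_nodeOf 0
  haveI : Finite ((D.torso t₀).E) :=
    Finite.of_injective (fun e => ((e.1 : (StarMG n).E) : Fin n))
      (fun a b h => Subtype.ext h)
  refine ⟨t₀, ?_⟩
  intro hAT
  haveI : Finite (TreeCutDecomp.CompAt T t₀) := by
    unfold TreeCutDecomp.CompAt SimpleGraph.ConnectedComponent
    infer_instance
  set VT := (↥(D.part t₀) ⊕ TreeCutDecomp.CompAt T t₀) with hVT
  haveI : Fintype VT := Fintype.ofFinite _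
  obtain ⟨X, -, hXcard, hXnb, hthin⟩ := hAT
  set x₀ : VT := Sum.inl ⟨0, h0⟩ with hx₀
  set g : Fin n → VT := fun i => D.torsoMap t₀ i.succ with hg
  have hmap0 : D.torsoMap t₀ 0 = x₀ := by
    simp [TreeCutDecomp.torsoMap, h0, hx₀]
  have hg0 : ∀ i, g i ≠ x₀ := by
    intro i hEq
    rw [hg] at hEq
    simp only [TreeCutDecomp.torsoMap] at hEq
    rw [hx₀] at hEq
    split_ifs at hEq with hm
    have := Subtype.ext_iff.mp (Sum.inl.inj hEq)
    exact Fin.succ_ne_zero i this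
  have hEdge : ∀ i : Fin n, ∃ e : (D.torso t₀).E,
      (D.torso t₀).ends e = s(x₀, g i) ∧ (e.1 : (StarMG n).E) = i := by
    intro i
    have hends : Sym2.map (D.torsoMap t₀) ((StarMG n).ends i) = s(x₀, g i) := by
      show Sym2.map (D.torsoMap t₀) s(0, i.succ) = s(x₀, g i)
      rw [Sym2.map_pair_eq, hmap0]
    have hnd : ¬ (Sym2.map (D.torsoMap t₀) ((StarMG n).ends i)).IsDiag := by
      rw [hends, Sym2.mk_isDiag_iff]
      exact fun hc => hg0 i hc.symm
    exact ⟨⟨i, hnd⟩, hends, rfl⟩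
  choose E hEends hEval using hEdge
  -- fibers of g are small
  have hfib : ∀ y : VT, Nat.card {i : Fin n // g i = y} ≤ α := by
    intro y
    match y with
    | Sum.inl ⟨v, hv⟩ =>
      have hsing : Subsingleton {i : Fin n // g i = Sum.inl ⟨v, hv⟩} := by
        constructor
        rintro ⟨i, hi⟩ ⟨j, hj⟩
        have hval : ∀ k : Fin n, g k = Sum.inl ⟨v, hv⟩ → k.succ = v := by
          intro k hk
          rw [hg] at hk
          simp only [TreeCutDecomp.torsoMap] at hk
          split_ifs at hk with hm
          exact Subtype.ext_iff.mp (Sum.inl.inj hk)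
        have hij : i.succ = j.succ := (hval i hi).trans (hval j hj).symm
        exact Subtype.ext (Fin.succ_injective _ hij)
      calc Nat.card {i : Fin n // g i = Sum.inl ⟨v, hv⟩} ≤ 1 := by
            rw [Nat.card_eq_fintype_card]
            exact Fintype.card_le_one_iff_subsingleton.mpr hsing
        _ ≤ α := hα
    | Sum.inr C =>
      obtain ⟨s, hs, hadj, hC⟩ := exists_adj_comp D.isTree.isConnected t₀ C
      have hmem : ∀ i : Fin n, g i = Sum.inr C →
          (i : (StarMG n).E) ∈ D.adhesionSet s t₀ := by
        intro i hi
        rw [hg] at hi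
        simp only [TreeCutDecomp.torsoMap] at hi
        split_ifs at hi with hm
        have hne : D.nodeOf i.succ ≠ t₀ :=
          fun htt => hm (htt ▸ D.mem_part_nodeOf i.succ)
        have hcomp : (T.induce {x : N | x ≠ t₀}).connectedComponentMk
            ⟨D.nodeOf i.succ, hne⟩ = C := Sum.inr.inj hi
        obtain ⟨w⟩ := SimpleGraph.ConnectedComponent.exact (hC.trans hcomp.symm)
        have hreach' : (T.deleteEdges {s(s, t₀)}).Reachable s (D.nodeOf i.succ) :=
          reachable_delete_of_induce_walk w
        refine ⟨i.succ, 0, ?_, ?_, ?_⟩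
        · show s(0, i.succ) = s(i.succ, (0 : Fin (n + 1)))
          exact Sym2.eq_swap
        · exact ⟨D.nodeOf i.succ, hreach', D.mem_part_nodeOf i.succ⟩
        · exact ⟨t₀, SimpleGraph.Reachable.refl _, h0⟩
      have hinj : Function.Injective
          (fun p : {i : Fin n // g i = Sum.inr C} =>
            (⟨p.1, hmem p.1 p.2⟩ : ↥(D.adhesionSet s t₀))) := by
        rintro ⟨i, hi⟩ ⟨j, hj⟩ h
        simp only [Subtype.mk.injEq] at h
        exact Subtype.ext (congrArg (fun x : ↥(D.adhesionSet s t₀) => x.1) h)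
      calc Nat.card {i : Fin n // g i = Sum.inr C}
          ≤ Nat.card ↥(D.adhesionSet s t₀) := Nat.card_le_card_of_injective _ hinj
        _ ≤ α := hD s t₀ hadj.symm
  -- the image of g is large
  set R : Finset VT := Finset.univ.image g with hR
  have hfibcard : ∀ y : VT,
      ((Finset.univ : Finset (Fin n)).filter (fun i => g i = y)).card ≤ α := by
    intro y
    have h1 : Nat.card {i : Fin n // g i = y} =
        ((Finset.univ : Finset (Fin n)).filter (fun i => g i = y)).card := by
      rw [Nat.card_eq_fintype_card]
      exact Fintype.card_subtype _
    have h2 := hfib y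
    omega
  have hRcard : 3 * α + 3 ≤ R.card := by
    have hcount0 : (Finset.univ : Finset (Fin n)).card = ∑ y ∈ R,
        ((Finset.univ : Finset (Fin n)).filter (fun i => g i = y)).card :=
      Finset.card_eq_sum_card_fiberwise
        (fun x _ => Finset.mem_image_of_mem g (Finset.mem_univ x))
    have hcount : n = ∑ y ∈ R,
        ((Finset.univ : Finset (Fin n)).filter (fun i => g i = y)).card := by
      simpa using hcount0
    have hle : n ≤ R.card * α := by
      calc n = _ := hcount
        _ ≤ ∑ _y ∈ R, α := Finset.sum_le_sum (fun y _ => hfibcard y)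
        _ = R.card * α := by rw [Finset.sum_const, smul_eq_mul]
    rw [hn, mul_comm] at hle
    exact Nat.le_of_mul_le_mul_right hle hα
  have hx₀R : x₀ ∉ R := by
    intro hx
    obtain ⟨i, -, hi⟩ := Finset.mem_image.mp hx
    exact hg0 i hi
  -- x₀ is not among the deleted vertices
  have hx₀X : x₀ ∉ X := by
    intro hx
    have hsub : (↑R : Set VT) ⊆ (D.torso t₀).nbrsIn Set.univ x₀ := by
      intro y hy
      obtain ⟨i, -, hi⟩ := Finset.mem_image.mp (by exact_mod_cast hy)
      exact ⟨Set.mem_univ y, E i, by rw [hEends i, hi]⟩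
    have h1 : R.card ≤ Nat.card ((D.torso t₀).nbrsIn Set.univ x₀) := by
      have h2 := Set.ncard_le_ncard hsub (Set.toFinite _)
      rw [Set.ncard_coe_finset] at h2
      rw [Nat.card_coe_set_eq]
      exact h2
    have h2 := hXnb x₀ hx
    omega
  have hx₀mem : x₀ ∈ Set.univ \ X := ⟨Set.mem_univ _, hx₀X⟩
  obtain ⟨Nn, en, hen⟩ := hthin
  set XF : Finset VT := (Set.toFinite X).toFinset with hXF
  have hXFcard : XF.card ≤ α := by
    have h1 : Nat.card X = XF.card := by
      rw [Nat.card_coe_set_eq, Set.ncard_eq_toFinset_card X (Set.toFinite X)]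
    omega
  set R' : Finset VT := R \ XF with hR'
  have hR'card : 2 * α + 3 ≤ R'.card := by
    have h1 := Finset.le_card_sdiff XF R
    rw [← hR'] at h1
    omega
  have hR'sub : ∀ y ∈ R', y ∈ Set.univ \ X := by
    intro y hy
    refine ⟨Set.mem_univ _, fun hyX => ?_⟩
    exact (Finset.mem_sdiff.mp hy).2 ((Set.Finite.mem_toFinset _).mpr hyX)
  have hR'R : ∀ y ∈ R', y ∈ R := fun y hy => (Finset.mem_sdiff.mp hy).1
  set Q : Finset (Fin Nn) := Finset.univ.filter (fun q => (en q : VT) ∈ R') with hQ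
  have hQcard : R'.card ≤ Q.card := by
    apply Finset.card_le_card_of_injOn
      (fun y => if h : y ∈ Set.univ \ X then en.symm ⟨y, h⟩ else en.symm ⟨x₀, hx₀mem⟩)
    · intro y hy
      rw [hQ, Finset.mem_coe, Finset.mem_filter]
      refine ⟨Finset.mem_univ _, ?_⟩
      beta_reduce
      rw [dif_pos (hR'sub y hy), Equiv.apply_symm_apply]
      exact hy
    · intro y hy y' hy' hEq
      simp only [dif_pos (hR'sub y hy), dif_pos (hR'sub y' hy')] at hEq
      have := congrArg (fun q => ((en q : ↥(Set.univ \ X)) : VT)) hEq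
      simpa using this
  set c : Fin Nn := en.symm ⟨x₀, hx₀mem⟩ with hc
  have hcval : ((en c : ↥(Set.univ \ X)) : VT) = x₀ := by
    rw [hc, Equiv.apply_symm_apply]
  have hqc : ∀ q ∈ Q, q ≠ c := by
    intro q hq hEq
    have hmem : (en q : VT) ∈ R' := (Finset.mem_filter.mp hq).2
    rw [hEq, hcval] at hmem
    exact hx₀R (hR'R _ hmem)
  -- main claim: few elements of Q on each side of c
  have claim : ∀ (i : Fin Nn) (F : Finset (Fin Nn)), F ⊆ Q →
      (∀ q ∈ F, (q < i ∧ i < c) ∨ (c < i ∧ i < q)) → F.card ≤ α := by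
    intro i F hFQ hside
    have hcross : ∀ q : {q : Fin Nn // q ∈ F}, ∃ e : (D.torso t₀).E,
        (D.torso t₀).ends e = s(x₀, ((en q.1 : ↥(Set.univ \ X)) : VT)) := by
      rintro ⟨q, hq⟩
      have hmem : (en q : VT) ∈ R' := (Finset.mem_filter.mp (hFQ hq)).2
      obtain ⟨ii, -, hii⟩ := Finset.mem_image.mp (hR'R _ hmem)
      exact ⟨E ii, by rw [hEends ii, hii]⟩
    choose φ hφ using hcross
    have hinj : Function.Injective (fun q : {q : Fin Nn // q ∈ F} =>
        (⟨φ q, by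
          rcases hside q.1 q.2 with ⟨hqi, hic⟩ | ⟨hci, hiq⟩
          · exact ⟨q.1, c, hqi, hic, by rw [hφ q, ← hcval]; exact Sym2.eq_swap⟩
          · exact ⟨c, q.1, hci, hiq, by rw [hφ q, ← hcval]⟩⟩ :
          {e : (D.torso t₀).E // ∃ j k : Fin Nn, j < i ∧ i < k ∧
            (D.torso t₀).ends e = s(((en j : ↥(Set.univ \ X)) : VT),
              ((en k : ↥(Set.univ \ X)) : VT))})) := by
      rintro q q' hEq
      have hphi : φ q = φ q' := Subtype.ext_iff.mp hEq
      have hends : s(x₀, ((en q.1 : ↥(Set.univ \ X)) : VT)) =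
          s(x₀, ((en q'.1 : ↥(Set.univ \ X)) : VT)) := by
        rw [← hφ q, ← hφ q', hphi]
      have hne : ((en q.1 : ↥(Set.univ \ X)) : VT) ≠ x₀ := by
        intro hx
        have hmem : (en q.1 : VT) ∈ R' := (Finset.mem_filter.mp (hFQ q.2)).2
        rw [hx] at hmem
        exact hx₀R (hR'R _ hmem)
      rcases Sym2.eq_iff.mp hends with ⟨-, h2⟩ | ⟨-, h2⟩
      · exact Subtype.ext (en.injective (Subtype.ext h2))
      · exact absurd h2 hne
    have h1 : F.card ≤ Nat.card {e : (D.torso t₀).E // ∃ j k : Fin Nn,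
        j < i ∧ i < k ∧ (D.torso t₀).ends e =
          s(((en j : ↥(Set.univ \ X)) : VT), ((en k : ↥(Set.univ \ X)) : VT))} := by
      rw [← Nat.card_eq_finsetCard F]
      exact Nat.card_le_card_of_injective _ hinj
    exact h1.trans (hen i)
  set F1 : Finset (Fin Nn) := Q.filter (fun q => q < c) with hF1d
  set F2 : Finset (Fin Nn) := Q.filter (fun q => c < q) with hF2d
  have hF1 : F1.card ≤ α + 1 := by
    by_contra hcon
    push_neg at hcon
    have hne : F1.Nonempty := Finset.card_pos.mp (by omega)
    set i := F1.max' hne with hi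
    have hiF : i ∈ F1 := F1.max'_mem hne
    have hic : i < c := (Finset.mem_filter.mp hiF).2
    have hsub : F1.erase i ⊆ Q :=
      (Finset.erase_subset _ _).trans (Finset.filter_subset _ _)
    have hcl := claim i (F1.erase i) hsub (fun q hq => Or.inl
      ⟨lt_of_le_of_ne (F1.le_max' q (Finset.mem_of_mem_erase hq))
        (Finset.ne_of_mem_erase hq), hic⟩)
    have hce := Finset.card_erase_of_mem hiF
    omega
  have hF2 : F2.card ≤ α + 1 := by
    by_contra hcon
    push_neg at hcon
    have hne : F2.Nonempty := Finset.card_pos.mp (by omega)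
    set i := F2.min' hne with hi
    have hiF : i ∈ F2 := F2.min'_mem hne
    have hic : c < i := (Finset.mem_filter.mp hiF).2
    have hsub : F2.erase i ⊆ Q :=
      (Finset.erase_subset _ _).trans (Finset.filter_subset _ _)
    have hcl := claim i (F2.erase i) hsub (fun q hq => Or.inr
      ⟨hic, lt_of_le_of_ne (F2.min'_le q (Finset.mem_of_mem_erase hq))
        (Ne.symm (Finset.ne_of_mem_erase hq))⟩)
    have hce := Finset.card_erase_of_mem hiF
    omega
  have hsplit : Q ⊆ F1 ∪ F2 := by
    intro q hq
    rcases lt_trichotomy q c with h | h | h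
    · exact Finset.mem_union_left _ (Finset.mem_filter.mpr ⟨hq, h⟩)
    · exact absurd h (hqc q hq)
    · exact Finset.mem_union_right _ (Finset.mem_filter.mpr ⟨hq, h⟩)
  have hQle := (Finset.card_le_card hsplit).trans (Finset.card_union_le F1 F2)
  omega

end Part2

end Helpers

/-- for all `ℓ ≥ 2` and `α > 0` the star `K_{1,n}` with `n = α(3α + 3)`
leaves does not contain the wall `W_ℓ` as a strong immersion minor, yet it admits no
tree-cut decomposition of adhesion at most `α` all of whose torsos are almost
`α`-thin. -/
theorem star_counterexample (l α : ℕ) (hl : 2 ≤ l) (hα : 0 < α) :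
    ¬ Multigraph.StrongImmersion
        ((Wall l).toMultigraph) (StarMG (α * (3 * α + 3))) ∧
    ∀ (N : Type) (_ : Finite N) (T : SimpleGraph N)
      (D : TreeCutDecomp (StarMG (α * (3 * α + 3))) T),
      D.AdhesionLE α → ∃ t : N, ¬ (D.torso t).AlmostThin α := by
  constructor
  · intro hsi
    have adj : ∀ (p q : WallVert l), gridAdj p.1 q.1 → ¬ deletedEdge p.1 q.1 →
        (preWall l).Adj p q := fun p q h1 h2 => ⟨h1, h2⟩
    set A := mkWV l 1 1 (by omega) (by omega) (by omega) (by omega) with hA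
    set U := mkWV l 2 1 (by omega) (by omega) (by omega) (by omega) with hU
    set B := mkWV l 2 2 (by omega) (by omega) (by omega) (by omega) with hB
    set V' := mkWV l 3 1 (by omega) (by omega) (by omega) (by omega) with hV'
    set Cv := mkWV l 4 1 (by omega) (by omega) (by omega) (by omega) with hCv
    set Dv := mkWV l 3 2 (by omega) (by omega) (by omega) (by omega) with hDv
    set A2 := mkWV l 1 2 (by omega) (by omega) (by omega) (by omega) with hA2
    set C2 := mkWV l 4 2 (by omega) (by omega) (by omega) (by omega) with hC2
    have aUA : (preWall l).Adj U A := adj _ _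
      (by simp only [hU, hA, mkWV_val]; unfold gridAdj; omega)
      (by simp only [hU, hA, mkWV_val]; unfold deletedEdge; omega)
    have aUB : (preWall l).Adj U B := adj _ _
      (by simp only [hU, hB, mkWV_val]; unfold gridAdj; omega)
      (by simp only [hU, hB, mkWV_val]; unfold deletedEdge; omega)
    have aVC : (preWall l).Adj V' Cv := adj _ _
      (by simp only [hV', hCv, mkWV_val]; unfold gridAdj; omega)
      (by simp only [hV', hCv, mkWV_val]; unfold deletedEdge; omega)
    have aVD : (preWall l).Adj V' Dv := adj _ _
      (by simp only [hV', hDv, mkWV_val]; unfold gridAdj; omega)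
      (by simp only [hV', hDv, mkWV_val]; unfold deletedEdge; omega)
    have aA1 : (preWall l).Adj A U := aUA.symm
    have aA2 : (preWall l).Adj A A2 := adj _ _
      (by simp only [hA, hA2, mkWV_val]; unfold gridAdj; omega)
      (by simp only [hA, hA2, mkWV_val]; unfold deletedEdge; omega)
    have aB1 : (preWall l).Adj B U := aUB.symm
    have aB2 : (preWall l).Adj B Dv := adj _ _
      (by simp only [hB, hDv, mkWV_val]; unfold gridAdj; omega)
      (by simp only [hB, hDv, mkWV_val]; unfold deletedEdge; omega)
    have aC1 : (preWall l).Adj Cv V' := aVC.symm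
    have aC2 : (preWall l).Adj Cv C2 := adj _ _
      (by simp only [hCv, hC2, mkWV_val]; unfold gridAdj; omega)
      (by simp only [hCv, hC2, mkWV_val]; unfold deletedEdge; omega)
    have aD1 : (preWall l).Adj Dv B := aB2.symm
    have aD2 : (preWall l).Adj Dv V' := aVD.symm
    have kU : U ∈ wallKeep l := mem_wallKeep_of_two (mkWV_ne (by decide)) aUA aUB
    have kA : A ∈ wallKeep l := mem_wallKeep_of_two (mkWV_ne (by decide)) aA1 aA2
    have kB : B ∈ wallKeep l := mem_wallKeep_of_two (mkWV_ne (by decide)) aB1 aB2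
    have kV : V' ∈ wallKeep l := mem_wallKeep_of_two (mkWV_ne (by decide)) aVC aVD
    have kC : Cv ∈ wallKeep l := mem_wallKeep_of_two (mkWV_ne (by decide)) aC1 aC2
    have kD : Dv ∈ wallKeep l := mem_wallKeep_of_two (mkWV_ne (by decide)) aD1 aD2
    set u' : ↥(wallKeep l) := ⟨U, kU⟩ with hu'
    set v' : ↥(wallKeep l) := ⟨V', kV⟩ with hv'
    set a' : ↥(wallKeep l) := ⟨A, kA⟩ with ha'
    set b' : ↥(wallKeep l) := ⟨B, kB⟩ with hb'
    set c' : ↥(wallKeep l) := ⟨Cv, kC⟩ with hc'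
    set d' : ↥(wallKeep l) := ⟨Dv, kD⟩ with hd'
    have wUA : (Wall l).Adj u' a' := aUA
    have wUB : (Wall l).Adj u' b' := aUB
    have wVC : (Wall l).Adj v' c' := aVC
    have wVD : (Wall l).Adj v' d' := aVD
    have subne : ∀ {x y : WallVert l} {hx : x ∈ wallKeep l} {hy : y ∈ wallKeep l},
        x ≠ y → (⟨x, hx⟩ : ↥(wallKeep l)) ≠ ⟨y, hy⟩ :=
      fun h hEq => h (Subtype.mk_eq_mk.mp hEq)
    have edgene : ∀ {x y z : ↥(wallKeep l)}
        {hxy : s(x, y) ∈ (Wall l).edgeSet} {hxz : s(x, z) ∈ (Wall l).edgeSet},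
        y ≠ z → x ≠ z →
        (⟨s(x, y), hxy⟩ : ((Wall l).toMultigraph).E) ≠ ⟨s(x, z), hxz⟩ := by
      intro x y z hxy hxz hyz hxz' hEq
      have hv := Subtype.mk_eq_mk.mp hEq
      rcases Sym2.eq_iff.mp hv with ⟨-, h2⟩ | ⟨h1, -⟩
      · exact hyz h2
      · exact hxz' h1
    exact star_leaf_conflict ((Wall l).toMultigraph) hsi u' v'
      (subne (mkWV_ne (by decide)))
      ⟨s(u', a'), (Wall l).mem_edgeSet.mpr wUA⟩
      ⟨s(u', b'), (Wall l).mem_edgeSet.mpr wUB⟩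
      (edgene (subne (mkWV_ne (by decide))) (subne (mkWV_ne (by decide))))
      ⟨s(v', c'), (Wall l).mem_edgeSet.mpr wVC⟩
      ⟨s(v', d'), (Wall l).mem_edgeSet.mpr wVD⟩
      (edgene (subne (mkWV_ne (by decide))) (subne (mkWV_ne (by decide))))
      (Sym2.mem_mk_left _ _) (Sym2.mem_mk_left _ _)
      (Sym2.mem_mk_left _ _) (Sym2.mem_mk_left _ _)
  · intro N hN T D hD
    exact star_decomp_bad hα rfl hN D hD
end
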